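/- arXiv:2503.19190 — 3 statements merged into one kernel-verified Lean document; each statement's English description precedes it below -/
import Mathlib

section
/- Conversely, if g : X → ℝ≥0 is convex and γ-homogeneous with γ ≥ 1 (g(αx) = |α|^γ g(x)), then p(x) := (g(x))^{1/γ} is a seminorm on X. -/
/-!
Homogeneity of `g` transfers to `p := g ^ (1 / γ)` directly. For the triangle inequality, if
`p x < a` and `p y < b` then `x + y` is the convex combination of `((a + b) / a) • x` and
`((a + b) / b) • y` with weights `a / (a + b)` and `b / (a + b)`; by homogeneity `g` is at most
`(a + b) ^ γ` at both points, hence, by convexity, at `x + y`. Letting `a ↓ p x`, `b ↓ p y` gives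
`p (x + y) ≤ p x + p y`.
-/

open Set

section Homogeneous

variable {X : Type*} [AddCommGroup X] [Module ℝ X] {g : X → ℝ} {γ : ℝ}

lemma rpow_one_div_smul_of_homogeneous (hpos : ∀ x, 0 ≤ g x) (hγ : γ ≠ 0)
    (hhom : ∀ (α : ℝ) (x : X), g (α • x) = |α| ^ γ * g x) (α : ℝ) (x : X) :
    g (α • x) ^ (1 / γ) = |α| * g x ^ (1 / γ) := by
  rw [hhom, Real.mul_rpow (by positivity) (hpos x), ← Real.rpow_mul (abs_nonneg α),
    mul_one_div_cancel hγ, Real.rpow_one]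

lemma le_add_rpow_of_convexOn_of_homogeneous (hconv : ConvexOn ℝ univ g)
    (hhom : ∀ (α : ℝ) (x : X), g (α • x) = |α| ^ γ * g x) {x y : X} {a b : ℝ}
    (ha : 0 < a) (hb : 0 < b) (hx : g x ≤ a ^ γ) (hy : g y ≤ b ^ γ) :
    g (x + y) ≤ (a + b) ^ γ := by
  have hscale : ∀ {c : ℝ} {z : X}, 0 < c → g z ≤ c ^ γ → g (((a + b) / c) • z) ≤ (a + b) ^ γ := by
    intro c z hc hz
    have hac : 0 ≤ (a + b) / c := by positivity
    calc g (((a + b) / c) • z) = ((a + b) / c) ^ γ * g z := by rw [hhom, abs_of_nonneg hac]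
      _ ≤ ((a + b) / c) ^ γ * c ^ γ := by gcongr
      _ = (a + b) ^ γ := by rw [← Real.mul_rpow hac hc.le, div_mul_cancel₀ _ hc.ne']
  have hseg : x + y ∈ segment ℝ (((a + b) / a) • x) (((a + b) / b) • y) := by
    refine ⟨a / (a + b), b / (a + b), by positivity, by positivity, by field_simp, ?_⟩
    simp only [smul_smul]
    rw [div_mul_div_cancel₀ (by positivity), div_mul_div_cancel₀ (by positivity), div_self ha.ne',
      div_self hb.ne', one_smul, one_smul]
  calc g (x + y) ≤ max (g (((a + b) / a) • x)) (g (((a + b) / b) • y)) :=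
        hconv.le_max_of_mem_segment (mem_univ _) (mem_univ _) hseg
    _ ≤ (a + b) ^ γ := max_le (hscale ha hx) (hscale hb hy)

lemma rpow_one_div_add_le_of_convexOn_of_homogeneous (hpos : ∀ x, 0 ≤ g x)
    (hconv : ConvexOn ℝ univ g) (hγ : 0 < γ)
    (hhom : ∀ (α : ℝ) (x : X), g (α • x) = |α| ^ γ * g x) (x y : X) :
    g (x + y) ^ (1 / γ) ≤ g x ^ (1 / γ) + g y ^ (1 / γ) := by
  have hlt : ∀ {z : X} {c : ℝ}, g z ^ (1 / γ) < c → g z ≤ c ^ γ := fun {z c} h =>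
    (Real.rpow_inv_le_iff_of_pos (hpos z) ((Real.rpow_nonneg (hpos z) _).trans h.le) hγ).1
      (by simpa only [one_div] using h.le)
  refine le_of_forall_pos_le_add fun ε hε => ?_
  set a := g x ^ (1 / γ) + ε / 2
  set b := g y ^ (1 / γ) + ε / 2
  have ha : 0 < a := add_pos_of_nonneg_of_pos (Real.rpow_nonneg (hpos x) _) (half_pos hε)
  have hb : 0 < b := add_pos_of_nonneg_of_pos (Real.rpow_nonneg (hpos y) _) (half_pos hε)
  have hxy := le_add_rpow_of_convexOn_of_homogeneous hconv hhom ha hb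
    (hlt (lt_add_of_pos_right _ (half_pos hε))) (hlt (lt_add_of_pos_right _ (half_pos hε)))
  calc g (x + y) ^ (1 / γ) ≤ a + b := by
        rw [one_div, Real.rpow_inv_le_iff_of_pos (hpos _) (by positivity) hγ]
        exact hxy
    _ = g x ^ (1 / γ) + g y ^ (1 / γ) + ε := by ring

end Homogeneous

theorem stmt_6 {X : Type*} [AddCommGroup X] [Module ℝ X] (g : X → ℝ)
    (hpos : ∀ x : X, 0 ≤ g x)
    (hconv : ∀ (x y : X) (t : ℝ), 0 ≤ t → t ≤ 1 →
      g (t • x + (1 - t) • y) ≤ t * g x + (1 - t) * g y)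
    (γ : ℝ) (hγ : 1 ≤ γ)
    (hhom : ∀ (α : ℝ) (x : X), g (α • x) = |α| ^ γ * g x) :
    (∀ x : X, 0 ≤ g x ^ (1 / γ)) ∧
    (∀ (α : ℝ) (x : X), g (α • x) ^ (1 / γ) = |α| * g x ^ (1 / γ)) ∧
    (∀ x y : X, g (x + y) ^ (1 / γ) ≤ g x ^ (1 / γ) + g y ^ (1 / γ)) := by
  have hγ₀ : 0 < γ := zero_lt_one.trans_le hγ
  have hconvOn : ConvexOn ℝ univ g := by
    refine ⟨convex_univ, fun x _ y _ s t hs ht hst => ?_⟩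
    obtain rfl : t = 1 - s := by linarith
    exact hconv x y s hs (by linarith)
  exact ⟨fun x => Real.rpow_nonneg (hpos x) _,
    rpow_one_div_smul_of_homogeneous hpos hγ₀.ne' hhom,
    rpow_one_div_add_le_of_convexOn_of_homogeneous hpos hconvOn hγ₀ hhom⟩
end

section
/- For every x ∈ ℝ^N, ‖x‖_∞ = min{‖z‖₁ : x = B_N z}, where B_N ∈ ℝ^{N×2^N} is the matrix whose columns are all sign vectors in {-1,+1}^N; i.e., the ℓ∞-norm is the atomic norm of the dictionary of sign vectors. -/
/-!
Any representation `x = ∑ z_s s` by sign vectors gives `‖x‖_∞ ≤ ∑ |z_s|` by the triangle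
inequality, since every sign vector has sup norm at most one. Conversely, with `M = ‖x‖_∞`,
choose independently in each coordinate `n` the sign `+1` with probability `(1 + x_n / M) / 2`
and `-1` otherwise, and let `z_s = M · P(s)`. Then `z ≥ 0`, `∑ z_s = M`, and the `n`-th coordinate
of `∑ z_s s` is `M` times the mean of the `n`-th sign, namely `x_n`.
-/

open Finset

section ProductWeights

variable {ι α R : Type*} [Fintype ι] [DecidableEq ι] [Fintype α] [CommSemiring R]

theorem sum_prod_eq_one_of_sum_eq_one {q : ι → α → R} (hq : ∀ i, ∑ a, q i a = 1) :
    ∑ s : ι → α, ∏ i, q i (s i) = 1 := by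
  rw [← Fintype.prod_sum, Fintype.prod_congr _ _ hq, prod_const_one]

/-- Under a product of probability weights, the mean of a function of one coordinate is its
mean under that coordinate's weights. -/
theorem sum_mul_prod_eq_of_sum_eq_one {q : ι → α → R} (hq : ∀ i, ∑ a, q i a = 1)
    (g : α → R) (n : ι) :
    ∑ s : ι → α, g (s n) * ∏ i, q i (s i) = ∑ a, g a * q n a := by
  let q' : ι → α → R := fun i a => (if i = n then g a else 1) * q i a
  have hq' (s : ι → α) : ∏ i, q' i (s i) = g (s n) * ∏ i, q i (s i) := by
    simp only [q', prod_mul_distrib, Fintype.prod_ite_eq']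
  calc ∑ s : ι → α, g (s n) * ∏ i, q i (s i)
      = ∏ i, ∑ a, q' i a := by simp only [Fintype.prod_sum, hq']
    _ = ∏ i, if i = n then ∑ a, g a * q n a else 1 := by
      refine Fintype.prod_congr _ _ fun i => ?_
      split_ifs with hi
      · subst hi; simp [q']
      · simp [q', hi, hq i]
    _ = ∑ a, g a * q n a := Fintype.prod_ite_eq' n _

end ProductWeights

section SignVectors

variable {ι : Type*} [Fintype ι]

def signVector (s : ι → Bool) : ι → ℝ := fun n => if s n then 1 else -1

theorem norm_signVector_le_one (s : ι → Bool) : ‖signVector s‖ ≤ 1 :=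
  (pi_norm_le_iff_of_nonneg zero_le_one).2 fun n => by
    unfold signVector; split_ifs <;> simp

/-- The law of a `±1` sign with mean `t`. -/
noncomputable def signWeight (t : ℝ) (b : Bool) : ℝ := if b then (1 + t) / 2 else (1 - t) / 2

theorem signWeight_nonneg {t : ℝ} (ht : |t| ≤ 1) (b : Bool) : 0 ≤ signWeight t b := by
  rw [abs_le] at ht
  unfold signWeight; split_ifs <;> linarith

theorem sum_signWeight (t : ℝ) : ∑ b, signWeight t b = 1 := by
  simp [signWeight]; ring

theorem sum_sign_mul_signWeight (t : ℝ) :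
    ∑ b, (if b then (1 : ℝ) else -1) * signWeight t b = t := by
  simp [signWeight]; ring

noncomputable def signCoeffs (x : ι → ℝ) (s : ι → Bool) : ℝ :=
  ‖x‖ * ∏ n, signWeight (x n / ‖x‖) (s n)

theorem signCoeffs_nonneg (x : ι → ℝ) (s : ι → Bool) : 0 ≤ signCoeffs x s := by
  refine mul_nonneg (norm_nonneg x) (prod_nonneg fun n _ => signWeight_nonneg ?_ _)
  rw [abs_div, abs_norm]
  exact div_le_one_of_le₀ (by simpa using norm_le_pi_norm x n) (norm_nonneg x)

variable [DecidableEq ι]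

theorem norm_le_sum_abs_of_sum_smul_signVector {x : ι → ℝ} {z : (ι → Bool) → ℝ}
    (hx : ∑ s, z s • signVector s = x) : ‖x‖ ≤ ∑ s, |z s| :=
  calc ‖x‖ ≤ ∑ s, ‖z s • signVector s‖ := hx ▸ norm_sum_le _ _
    _ ≤ ∑ s, |z s| := sum_le_sum fun s _ => by
      rw [norm_smul, Real.norm_eq_abs]
      exact mul_le_of_le_one_right (abs_nonneg _) (norm_signVector_le_one s)

theorem sum_signCoeffs (x : ι → ℝ) : ∑ s, signCoeffs x s = ‖x‖ := by
  simp only [signCoeffs]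
  rw [← mul_sum, sum_prod_eq_one_of_sum_eq_one (fun n => sum_signWeight _), mul_one]

theorem sum_smul_signVector_signCoeffs (x : ι → ℝ) : ∑ s, signCoeffs x s • signVector s = x := by
  funext n
  calc (∑ s, signCoeffs x s • signVector s) n
      = ‖x‖ * ∑ s : ι → Bool, (if s n then 1 else -1) * ∏ m, signWeight (x m / ‖x‖) (s m) := by
        simp only [Finset.sum_apply, Pi.smul_apply, smul_eq_mul, signCoeffs, signVector, mul_sum]
        exact sum_congr rfl fun s _ => by ring
    _ = ‖x‖ * (x n / ‖x‖) := by
        rw [sum_mul_prod_eq_of_sum_eq_one (fun m => sum_signWeight _) (fun b => if b then 1 else -1),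
          sum_sign_mul_signWeight]
    _ = x n := by
        rw [← mul_div_assoc]
        exact mul_div_cancel_left_of_imp fun hx => by simpa using (norm_le_pi_norm x n).trans_eq hx

end SignVectors

theorem stmt_16 {N : ℕ} (x : Fin N → ℝ) :
    IsLeast {c : ℝ | ∃ z : (Fin N → Bool) → ℝ,
        (∀ n : Fin N, (∑ s : Fin N → Bool, (if s n then (1 : ℝ) else -1) * z s) = x n) ∧
        c = ∑ s : Fin N → Bool, |z s|}
      ‖x‖ := by
  have sum_eq_iff (z : (Fin N → Bool) → ℝ) :
      (∀ n, ∑ s, (if s n then (1 : ℝ) else -1) * z s = x n) ↔ ∑ s, z s • signVector s = x := by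
    simp only [funext_iff, Finset.sum_apply, Pi.smul_apply, smul_eq_mul, signVector, mul_comm]
  refine ⟨⟨signCoeffs x, (sum_eq_iff _).2 (sum_smul_signVector_signCoeffs x), ?_⟩, ?_⟩
  · simp only [abs_of_nonneg (signCoeffs_nonneg x _), sum_signCoeffs]
  · rintro c ⟨z, hz, rfl⟩
    exact norm_le_sum_abs_of_sum_smul_signVector ((sum_eq_iff z).1 hz)
end

section
/- For d ≥ 3, there is no matrix L ∈ ℝ^{N×d} (for any N) such that ‖x‖_∞ = ‖Lx‖₁ for all x ∈ ℝ^d. -/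
/-! Norms of the form `x ↦ ‖L x‖₁` are sums of `|φ x|` for linear functionals `φ`, and `|·|` on `ℝ`
satisfies Hlawka's inequality `|a+b| + |b+c| + |a+c| ≤ |a| + |b| + |c| + |a+b+c|` (a sign check),
which is preserved by precomposition with additive maps and by sums. The sup norm violates it as
soon as there are three coordinates: for `u = (1,1,-1)`, `v = (1,-1,1)`, `w = (-1,1,1)` the left
side is `2 + 2 + 2` and the right side is `1 + 1 + 1 + 1`. -/

open Finset

def HlawkaIneq {E : Type*} [AddCommMonoid E] (f : E → ℝ) : Prop :=
  ∀ u v w, f (u + v) + f (v + w) + f (u + w) ≤ f u + f v + f w + f (u + v + w)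

theorem hlawkaIneq_abs : HlawkaIneq (|·| : ℝ → ℝ) := by
  intro a b c
  rcases abs_cases a with ⟨_, _⟩ | ⟨_, _⟩ <;>
  rcases abs_cases b with ⟨_, _⟩ | ⟨_, _⟩ <;>
  rcases abs_cases c with ⟨_, _⟩ | ⟨_, _⟩ <;>
  rcases abs_cases (a + b) with ⟨_, _⟩ | ⟨_, _⟩ <;>
  rcases abs_cases (b + c) with ⟨_, _⟩ | ⟨_, _⟩ <;>
  rcases abs_cases (a + c) with ⟨_, _⟩ | ⟨_, _⟩ <;>
  rcases abs_cases (a + b + c) with ⟨_, _⟩ | ⟨_, _⟩ <;>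
  linarith

namespace HlawkaIneq

variable {E F : Type*} [AddCommMonoid E] [AddCommMonoid F]

theorem comp {f : F → ℝ} (hf : HlawkaIneq f) (g : E →+ F) : HlawkaIneq (f ∘ g) := by
  intro u v w
  simpa only [Function.comp_apply, map_add] using hf (g u) (g v) (g w)

theorem sum {ι : Type*} (s : Finset ι) {f : ι → E → ℝ} (hf : ∀ i ∈ s, HlawkaIneq (f i)) :
    HlawkaIneq (fun x => ∑ i ∈ s, f i x) := by
  intro u v w
  simp only [← sum_add_distrib]
  exact sum_le_sum fun i hi => hf i hi u v w

end HlawkaIneq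

theorem hlawkaIneq_sum_abs_mulVec {m n : Type*} [Fintype m] [Fintype n]
    (L : Matrix m n ℝ) : HlawkaIneq (fun x => ∑ i, |L.mulVec x i|) :=
  HlawkaIneq.sum _ fun i _ => hlawkaIneq_abs.comp
    ((LinearMap.proj i).comp (Matrix.mulVecLin L)).toAddMonoidHom

theorem norm_single_add_single_add_single {ι : Type*} [Fintype ι] [DecidableEq ι]
    {i j k : ι} (hij : i ≠ j) (hik : i ≠ k) (hjk : j ≠ k) (a b c : ℝ) :
    ‖(Pi.single i a + Pi.single j b + Pi.single k c : ι → ℝ)‖ = max |a| (max |b| |c|) := by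
  set x : ι → ℝ := Pi.single i a + Pi.single j b + Pi.single k c
  have hxi : x i = a := by simp [x, hij, hik]
  have hxj : x j = b := by simp [x, hij.symm, hjk]
  have hxk : x k = c := by simp [x, hik.symm, hjk.symm]
  refine le_antisymm ((pi_norm_le_iff_of_nonneg (by positivity)).2 fun l => ?_) ?_
  · by_cases hli : l = i
    · simp [hli, hxi]
    by_cases hlj : l = j
    · simp [hlj, hxj]
    by_cases hlk : l = k
    · simp [hlk, hxk]
    simp [x, hli, hlj, hlk]
  · have := norm_le_pi_norm x
    refine max_le ?_ (max_le ?_ ?_)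
    · simpa [hxi] using this i
    · simpa [hxj] using this j
    · simpa [hxk] using this k

theorem not_hlawkaIneq_pi_norm {ι : Type*} [Fintype ι] {i j k : ι}
    (hij : i ≠ j) (hik : i ≠ k) (hjk : j ≠ k) : ¬HlawkaIneq (‖·‖ : (ι → ℝ) → ℝ) := by
  classical
  intro H
  set f : ℝ → ℝ → ℝ → (ι → ℝ) := fun a b c => Pi.single i a + Pi.single j b + Pi.single k c
  have hf_add a b c a' b' c' : f a b c + f a' b' c' = f (a + a') (b + b') (c + c') := by
    simp only [f, Pi.single_add]; abel
  have h := H (f 1 1 (-1)) (f 1 (-1) 1) (f (-1) 1 1)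
  simp only [hf_add, f, norm_single_add_single_add_single hij hik hjk] at h
  norm_num at h

theorem stmt_18 {d : ℕ} (hd : 3 ≤ d) :
    ¬∃ (N : ℕ) (L : Matrix (Fin N) (Fin d) ℝ),
        ∀ x : Fin d → ℝ, ‖x‖ = ∑ n, |L.mulVec x n| := by
  rintro ⟨N, L, hL⟩
  refine not_hlawkaIneq_pi_norm (i := (⟨0, by omega⟩ : Fin d))
    (j := ⟨1, by omega⟩) (k := ⟨2, by omega⟩)
    (by simp [Fin.ext_iff]) (by simp [Fin.ext_iff]) (by simp [Fin.ext_iff]) ?_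
  simpa only [← funext hL] using hlawkaIneq_sum_abs_mulVec L
end
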